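/- arXiv:0708.3628 — 2 statements merged into one kernel-verified Lean document; each statement's English description precedes it below -/
import Mathlib

section
/- With A_k^(n) defined recursively as in the paper, the vertical stacking S^(n) = [A_0^(n); A_1^(n); ...; A_n^(n)] lists all 2^n vertices of {0,1}^n in increasing Hales order from top to bottom. -/
open Finset

/-- Hamming weight of a vertex of the hypercube `{0,1}^n`. -/
def wt {n : ℕ} (u : Fin n → Bool) : ℕ := (Finset.univ.filter fun i => u i = true).card

/-- `u` is strictly greater than `v` in lexicographic order relative to the
right-to-left order of the coordinates. -/
def rtlLexGT {n : ℕ} (u v : Fin n → Bool) : Prop :=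
  ∃ i, v i < u i ∧ ∀ j, i < j → u j = v j

/-- The Hales order on `{0,1}^n`. -/
def halesLE {n : ℕ} (u v : Fin n → Bool) : Prop :=
  wt u < wt v ∨ (wt u = wt v ∧ (u = v ∨ rtlLexGT u v))

/-- The recursively defined matrices `A_k^{(n)}`, encoded as lists of rows. -/
def A : (n : ℕ) → (k : ℕ) → List (Fin n → Bool)
  | _, 0 => [fun _ => false]
  | 0, _ + 1 => []
  | n + 1, k + 1 =>
    if k + 1 = n + 1 then [fun _ => true]
    else (A n k).map (fun u => Fin.snoc u true) ++ (A n (k + 1)).map (fun u => Fin.snoc u false)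

/-- The stacking `S^{(n)} = [A_0^{(n)}; …; A_n^{(n)}]`. -/
def Sl (n : ℕ) : List (Fin n → Bool) := (List.range (n + 1)).flatMap (A n)

/-- Entry `(i, j)` (0-based) of the adjacency matrix `M^{(n)}_{k,k'}` between the
weight-`k` and weight-`k'` levels of the hypercube, both in Hales order. -/
def Mval (n k k' : ℕ) (i j : ℕ) : ℕ :=
  if hammingDist ((A n k).getD i (fun _ => false)) ((A n k').getD j (fun _ => false)) = 1
  then 1 else 0

/-- Manhattan radius `r(M^{(n)}_{k,k'})`. -/
def mr (n k k' : ℕ) : ℕ :=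
  ((Finset.range (A n k).length) ×ˢ (Finset.range (A n k').length)).sup
    (fun p => if Mval n k k' p.1 p.2 ≠ 0 then (A n k).length - p.1 + p.2 else 0)

/-- Bandwidth of a numbering of the hypercube. -/
def numBW (n : ℕ) (η : (Fin n → Bool) ≃ Fin (2 ^ n)) : ℕ :=
  Finset.univ.sup fun p : (Fin n → Bool) × (Fin n → Bool) =>
    if hammingDist p.1 p.2 = 1 then Nat.dist (η p.1) (η p.2) else 0

/-- Bandwidth of the hypercube `Q^{(n)}`. -/
noncomputable def cubeBW (n : ℕ) : ℕ := sInf (Set.range (numBW n))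

/-- Minimum edge-distance of a numbering of the hypercube. -/
noncomputable def abwOf (n : ℕ) (η : (Fin n → Bool) ≃ Fin (2 ^ n)) : ℕ :=
  sInf {d | ∃ u v : Fin n → Bool, hammingDist u v = 1 ∧ d = Nat.dist (η u) (η v)}

/-- Antibandwidth of the hypercube `Q^{(n)}`. -/
noncomputable def cubeABW (n : ℕ) : ℕ := sSup (Set.range (abwOf n))

/-- Bandwidth of the full Hales-ordered adjacency matrix `M^{(n)}`. -/
def bwM (n : ℕ) : ℕ :=
  ((Finset.range (Sl n).length) ×ˢ (Finset.range (Sl n).length)).sup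
    (fun p =>
      if hammingDist ((Sl n).getD p.1 (fun _ => false)) ((Sl n).getD p.2 (fun _ => false)) = 1
      then Nat.dist p.1 p.2 else 0)

/-- Manhattan radius of a general `s × t` matrix. -/
def manRadius {s t : ℕ} (M : Matrix (Fin s) (Fin t) ℕ) : ℕ :=
  Finset.univ.sup fun p : Fin s × Fin t => if M p.1 p.2 ≠ 0 then s - (p.1 : ℕ) + p.2 else 0

/-! `A n k` is exactly the weight-`k` level of `{0,1}^n`, and it is strictly decreasing in
right-to-left lexicographic order: both halves of the recursion inherit this from the lower
dimension, and every row of the first half ends in `1` while every row of the second ends in `0`.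
Completeness and the absence of repetitions then give the length `2 ^ n`. -/

lemma wt_snoc {n : ℕ} (u : Fin n → Bool) (b : Bool) : wt (Fin.snoc u b) = wt u + b.toNat := by
  unfold wt
  rw [Finset.card_filter, Finset.card_filter, Fin.sum_univ_castSucc]
  cases b <;> simp

lemma wt_le {n : ℕ} (u : Fin n → Bool) : wt u ≤ n :=
  (Finset.card_filter_le _ _).trans_eq (Finset.card_fin n)

lemma wt_eq_zero_iff {n : ℕ} {u : Fin n → Bool} : wt u = 0 ↔ u = fun _ => false := by
  simp [wt, funext_iff]

lemma wt_eq_self_iff {n : ℕ} {u : Fin n → Bool} : wt u = n ↔ u = fun _ => true := by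
  have h := Finset.card_eq_iff_eq_univ (Finset.univ.filter fun i => u i = true)
  rw [Fintype.card_fin] at h
  simp [wt, h, Finset.filter_eq_self, funext_iff]

lemma snoc_mem_map_snoc {n : ℕ} {l : List (Fin n → Bool)} {u : Fin n → Bool} {b c : Bool} :
    (Fin.snoc u b : Fin (n + 1) → Bool) ∈ l.map (Fin.snoc · c) ↔ b = c ∧ u ∈ l := by
  simp only [List.mem_map, Fin.snoc_inj]
  aesop

theorem mem_A_iff : ∀ {n k : ℕ} {u : Fin n → Bool}, u ∈ A n k ↔ wt u = k
  | _, 0, _ => by simp [A, wt_eq_zero_iff]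
  | 0, _ + 1, _ => by simp [A, wt]
  | n + 1, k + 1, u => by
    rw [A]
    split_ifs with h
    · rw [h, wt_eq_self_iff, List.mem_singleton]
    · induction u using Fin.snocCases with
      | _ v b =>
        rw [List.mem_append, snoc_mem_map_snoc, snoc_mem_map_snoc, mem_A_iff, mem_A_iff, wt_snoc]
        cases b <;> simp

lemma rtlLexGT.ne {n : ℕ} {u v : Fin n → Bool} (h : rtlLexGT u v) : u ≠ v := by
  rintro rfl
  obtain ⟨i, hi, -⟩ := h
  exact lt_irrefl _ hi

lemma rtlLexGT.snoc {n : ℕ} {u v : Fin n → Bool} (h : rtlLexGT u v) (b : Bool) :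
    rtlLexGT (Fin.snoc u b : Fin (n + 1) → Bool) (Fin.snoc v b) := by
  obtain ⟨i, hi, hagree⟩ := h
  refine ⟨i.castSucc, by simpa using hi, fun j hj => ?_⟩
  induction j using Fin.lastCases with
  | last => simp
  | cast j => simpa using hagree j (Fin.castSucc_lt_castSucc_iff.1 hj)

lemma rtlLexGT_snoc_true_snoc_false {n : ℕ} (u v : Fin n → Bool) :
    rtlLexGT (Fin.snoc u true : Fin (n + 1) → Bool) (Fin.snoc v false) :=
  ⟨Fin.last n, by simp, fun j hj => absurd hj (Fin.le_last j).not_gt⟩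

theorem pairwise_rtlLexGT_A : ∀ n k : ℕ, (A n k).Pairwise rtlLexGT
  | _, 0 => by simp [A]
  | 0, _ + 1 => by simp [A]
  | n + 1, k + 1 => by
    rw [A]
    split_ifs
    · exact List.pairwise_singleton _ _
    · refine List.pairwise_append.2 ⟨?_, ?_, ?_⟩
      · exact List.pairwise_map.2 ((pairwise_rtlLexGT_A n k).imp (·.snoc true))
      · exact List.pairwise_map.2 ((pairwise_rtlLexGT_A n (k + 1)).imp (·.snoc false))
      · simp only [List.mem_map]
        rintro _ ⟨u, -, rfl⟩ _ ⟨v, -, rfl⟩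
        exact rtlLexGT_snoc_true_snoc_false u v

lemma List.Nodup.length_eq_card_of_forall_mem {α : Type*} [Fintype α] {l : List α}
    (hl : l.Nodup) (hmem : ∀ a, a ∈ l) : l.length = Fintype.card α := by
  classical
  rw [← List.toFinset_card_of_nodup hl,
    Finset.eq_univ_of_forall fun a => List.mem_toFinset.2 (hmem a), Finset.card_univ]

/-- The stacking `S^{(n)} = [A_0^{(n)}; …; A_n^{(n)}]` lists all `2^n`
vertices of `{0,1}^n` in strictly increasing Hales order from top to bottom. -/
theorem S_lists_all_in_hales_order (n : ℕ) :
    (∀ u : Fin n → Bool, u ∈ Sl n) ∧ (Sl n).length = 2 ^ n ∧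
      (Sl n).Pairwise (fun u v => halesLE u v ∧ u ≠ v) := by
  have complete : ∀ u : Fin n → Bool, u ∈ Sl n := fun u =>
    List.mem_flatMap.2 ⟨wt u, List.mem_range.2 (Nat.lt_succ_of_le (wt_le u)), mem_A_iff.2 rfl⟩
  have sorted : (Sl n).Pairwise (fun u v => halesLE u v ∧ u ≠ v) := by
    refine List.pairwise_flatMap.2 ⟨fun k _ => ?_, List.pairwise_lt_range.imp ?_⟩
    · refine (pairwise_rtlLexGT_A n k).imp_of_mem fun hu hv h => ?_
      exact ⟨Or.inr ⟨(mem_A_iff.1 hu).trans (mem_A_iff.1 hv).symm, Or.inr h⟩, h.ne⟩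
    · intro k l hkl u hu v hv
      have hwt : wt u < wt v := by rwa [mem_A_iff.1 hu, mem_A_iff.1 hv]
      exact ⟨Or.inl hwt, fun h => hwt.ne (congrArg wt h)⟩
  refine ⟨complete, ?_, sorted⟩
  rw [List.Nodup.length_eq_card_of_forall_mem (sorted.imp And.right) complete]
  simp
end

section
/- For 2 ≤ k ≤ n, the Manhattan radius of the Hales-ordered adjacency matrix between weight-k and weight-(k-1) levels satisfies r(M^(n)_{k,k-1}) = C(n-1,k) + C(n-1,k-2) + C(n-1,k-1). -/
open Finset

/-! Splitting off the last coordinate writes `M^{(n)}_{k,k-1}` as `[[M', I], [0, M'']]`, where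
`I` pairs `snoc u true` with `snoc u false`. With `s` rows and `c = C(n-1,k-2)` columns in the
left half, an entry `(i, j)` contributes `s - i + j ≤ s + c` as soon as `j ≤ i + c`: outside `I`
the index ranges alone force this, on `I` it is an equality, and `s + c` is the claimed value. -/

theorem hammingDist_snoc {n : ℕ} {β : Type*} [DecidableEq β] (u v : Fin n → β) (a b : β) :
    hammingDist (Fin.snoc u a : Fin (n + 1) → β) (Fin.snoc v b) =
      hammingDist u v + if a = b then 0 else 1 := by
  simp only [hammingDist, Finset.card_filter, Fin.sum_univ_castSucc, Fin.snoc_castSucc,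
    Fin.snoc_last, ite_not]

theorem A_succ_succ {n k : ℕ} (h : k ≠ n) :
    A (n + 1) (k + 1) =
      (A n k).map (Fin.snoc · true) ++ (A n (k + 1)).map (Fin.snoc · false) := by
  rw [A, if_neg (by omega)]

theorem A_self (n : ℕ) : A n n = [fun _ => true] := by
  cases n with
  | zero => simp only [A, List.cons.injEq, and_true]; exact funext Fin.elim0
  | succ n => rw [A, if_pos rfl]

theorem length_A (n k : ℕ) : (A n k).length = n.choose k := by
  induction n generalizing k with
  | zero => cases k <;> simp [A]
  | succ n ih =>
    rcases k with _ | k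
    · simp [A]
    by_cases hk : k = n
    · simp [hk, A_self]
    · simp [A_succ_succ hk, ih, Nat.choose_succ_succ]

theorem nodup_A (n k : ℕ) : (A n k).Nodup := by
  induction n generalizing k with
  | zero => cases k <;> simp [A]
  | succ n ih =>
    rcases k with _ | k
    · simp [A]
    by_cases hk : k = n
    · simp [hk, A_self]
    rw [A_succ_succ hk]
    refine ((ih k).map (Fin.snoc_left_injective (α := fun _ => Bool) _)).append
      ((ih (k + 1)).map (Fin.snoc_left_injective (α := fun _ => Bool) _)) ?_
    simp [List.disjoint_left]

theorem getElem_A_succ_succ_of_lt {n k i : ℕ} (hk : k ≠ n) (hi : i < (A n k).length) :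
    (A (n + 1) (k + 1))[i]'(by simp [A_succ_succ hk]; omega) = Fin.snoc (A n k)[i] true := by
  rw [List.getElem_of_eq (A_succ_succ hk), List.getElem_append_left (by simpa using hi),
    List.getElem_map]

theorem getElem_A_succ_succ_of_ge {n k i : ℕ} (hk : k ≠ n) (hi : (A n k).length ≤ i)
    (hi' : i < (A (n + 1) (k + 1)).length) :
    (A (n + 1) (k + 1))[i] =
      Fin.snoc ((A n (k + 1))[i - (A n k).length]'(by simp [A_succ_succ hk] at hi'; omega))
        false := by
  rw [List.getElem_of_eq (A_succ_succ hk), List.getElem_append_right (by simpa using hi)]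
  simp only [List.getElem_map, List.length_map]

theorem getElem_A_succ_zero {n k : ℕ} (hk : k ≤ n) :
    (A (n + 1) (k + 1))[0]'(by simp [length_A, Nat.choose_pos, hk]) =
      Fin.snoc ((A n k)[0]'(by simp [length_A, Nat.choose_pos, hk])) true := by
  obtain rfl | hk := hk.eq_or_lt
  · simp only [A_self, List.getElem_cons_zero]
    funext x
    refine Fin.lastCases ?_ (fun i => ?_) x <;> simp
  · exact getElem_A_succ_succ_of_lt hk.ne (by simp [length_A, Nat.choose_pos, hk.le])

theorem mr_le_iff {n k k' r : ℕ} :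
    mr n k k' ≤ r ↔ ∀ i j (hi : i < (A n k).length) (hj : j < (A n k').length),
      hammingDist (A n k)[i] (A n k')[j] = 1 → (A n k).length - i + j ≤ r := by
  simp only [mr, Mval, Finset.sup_le_iff, Finset.mem_product, Finset.mem_range, Prod.forall,
    and_imp]
  refine forall₂_congr fun i j => forall₂_congr fun hi hj => ?_
  simp only [List.getD_eq_getElem _ _ hi, List.getD_eq_getElem _ _ hj]
  by_cases hd : hammingDist (A n k)[i] (A n k')[j] = 1 <;> simp [hd]

theorem le_add_choose_of_hammingDist_eq_one {m l i j : ℕ} (hl : l < m)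
    (hi : i < (A (m + 1) (l + 2)).length) (hj : j < (A (m + 1) (l + 1)).length)
    (h : hammingDist (A (m + 1) (l + 2))[i] (A (m + 1) (l + 1))[j] = 1) :
    j ≤ i + m.choose l := by
  have hcols : (A (m + 1) (l + 1)).length = m.choose l + m.choose (l + 1) := by
    rw [length_A, Nat.choose_succ_succ']
  obtain hlm | rfl : l + 1 < m ∨ m = l + 1 := by omega
  · by_cases hia : i < (A m (l + 1)).length
    · by_cases hjb : (A m l).length ≤ j
      · rw [getElem_A_succ_succ_of_lt hlm.ne hia, getElem_A_succ_succ_of_ge hl.ne hjb hj,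
          hammingDist_snoc] at h
        have hij :=
          (nodup_A m (l + 1)).getElem_inj_iff.1 (hammingDist_eq_zero.1 (by simpa using h))
        rw [length_A] at hij
        omega
      · rw [length_A] at hjb
        omega
    · rw [length_A] at hia
      omega
  · rw [hcols, Nat.choose_self, Nat.choose_succ_self_right] at hj
    rw [Nat.choose_succ_self_right]
    omega

theorem hammingDist_A_zero_length_eq_one {m l : ℕ} (hl : l < m) :
    hammingDist ((A (m + 1) (l + 2))[0]'(by simp [length_A, Nat.choose_pos, hl]))
      ((A (m + 1) (l + 1))[(A m l).length]'
        (by simp [length_A, Nat.choose_succ_succ', Nat.choose_pos, hl])) = 1 := by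
  rw [getElem_A_succ_zero hl, getElem_A_succ_succ_of_ge hl.ne le_rfl, hammingDist_snoc]
  simp

/-- For `2 ≤ k ≤ n`,
`r(M^{(n)}_{k,k-1}) = C(n-1,k) + C(n-1,k-2) + C(n-1,k-1)`. -/
theorem manhattan_radius_down (n k : ℕ) (hk1 : 2 ≤ k) (hk2 : k ≤ n) :
    mr n k (k - 1) = (n - 1).choose k + (n - 1).choose (k - 2) + (n - 1).choose (k - 1) := by
  obtain ⟨l, rfl⟩ : ∃ l, k = l + 2 := ⟨k - 2, by omega⟩
  obtain ⟨m, rfl⟩ : ∃ m, n = m + 1 := ⟨n - 1, by omega⟩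
  have hl : l < m := by omega
  have hrows : (A (m + 1) (l + 2)).length = m.choose (l + 1) + m.choose (l + 2) := by
    rw [length_A, Nat.choose_succ_succ']
  show mr (m + 1) (l + 2) (l + 1) = m.choose (l + 2) + m.choose l + m.choose (l + 1)
  apply le_antisymm
  · refine mr_le_iff.2 fun i j hi hj h => ?_
    have := le_add_choose_of_hammingDist_eq_one hl hi hj h
    omega
  · have := mr_le_iff.1 le_rfl _ _ _ _ (hammingDist_A_zero_length_eq_one hl)
    rw [hrows, length_A] at this
    omega
end
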